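/- Let M be a loopless matroid of rank d+1 on a finite ground set E, and let v : E → ℝ be a vector such that for every chain F_1 ⊊ ⋯ ⊊ F_d of proper flats of M with rk_M(F_i) = i, the vector v lies in the ℝ-linear span of {1_{F_1}, …, 1_{F_d}, 1_E}. Then v(e) = v(f) whenever e and f are two elements of E contained in a common circuit of M; consequently v is constant on each connected component of M. -/

import Mathlib

/-- A circuit of a matroid is a minimal dependent set. -/
def Matroid.Circuit {α : Type*} (M : Matroid α) (C : Set α) : Prop :=
  M.Dep C ∧ ∀ D ⊂ C, ¬ M.Dep D

/-- A matroid is loopless if every singleton contained in the ground set is independent. -/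
def Matroid.Loopless' {α : Type*} (M : Matroid α) : Prop :=
  ∀ e ∈ M.E, M.Indep {e}

/-- The rank of a set `X` in a matroid: the supremum of the cardinalities of the
independent sets contained in `X`. -/
noncomputable def Matroid.rk {α : Type*} (M : Matroid α) (X : Set α) : ℕ :=
  sSup {n : ℕ | ∃ I, M.Indep I ∧ I ⊆ X ∧ I.ncard = n}

/-- Two elements are connected in `M` if some circuit of `M` contains both; the
connected components of `M` are the classes of the equivalence relation this generates. -/
def Matroid.ConnectedTo {α : Type*} (M : Matroid α) (e f : α) : Prop :=
  Relation.EqvGen (fun x y => ∃ C, M.Circuit C ∧ x ∈ C ∧ y ∈ C) e f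

/-!
Given a circuit `C` and `e ≠ f` in `C`, extend the independent set `C \ {e}` to a base and list
it with the elements of `C \ {e, f}` first and `f` next. The closures of the initial segments of
this list form a full flag of proper flats. Each of them lies either in `cl (C \ {e, f})`, which
contains neither `e` nor `f`, or contains `C \ {e}`, whose closure contains both. So every
generator of the span, and hence `v`, takes the same value at `e` and at `f`.
-/

lemma List.Nodup.ncard_setOf_mem {α : Type*} {l : List α} (hl : l.Nodup) :
    {x | x ∈ l}.ncard = l.length := by
  classical
  rw [← List.coe_toFinset, Set.ncard_coe_finset, List.toFinset_card_of_nodup hl]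

lemma Set.Finite.exists_nodup_list {α : Type*} {s : Set α} (hs : s.Finite) :
    ∃ l : List α, l.Nodup ∧ {x | x ∈ l} = s :=
  ⟨hs.toFinset.toList, hs.toFinset.nodup_toList, by ext; simp⟩

lemma apply_eq_apply_of_mem_span {α R : Type*} [Semiring R] {s : Set (α → R)} {v : α → R}
    {e f : α} (hs : ∀ w ∈ s, w e = w f) (hv : v ∈ Submodule.span R s) : v e = v f :=
  (Submodule.span_le (p := LinearMap.eqLocus (LinearMap.proj e : (α → R) →ₗ[R] R)
    (LinearMap.proj f))).mpr (fun w hw ↦ hs w hw) hv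

namespace Matroid

variable {α : Type*} {M : Matroid α}

lemma Circuit.isCircuit {C : Set α} (hC : M.Circuit C) : M.IsCircuit C :=
  isCircuit_iff_forall_ssubset.mpr ⟨hC.1, fun I hIC ↦
    (M.not_dep_iff (hIC.subset.trans hC.1.subset_ground)).mp (hC.2 I hIC)⟩

lemma IsBasis'.rk_eq_ncard {I X : Set α} (hI : M.IsBasis' I X) (hIfin : I.Finite) :
    M.rk X = I.ncard := by
  refine le_antisymm (csSup_le ⟨_, I, hI.indep, hI.subset, rfl⟩ ?_)
    (le_csSup ⟨I.ncard, ?_⟩ ⟨I, hI.indep, hI.subset, rfl⟩) <;>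
  · rintro _ ⟨J, hJ, hJX, rfl⟩
    have hle : J.encard ≤ I.encard := hI.encard_eq_eRk ▸ hJ.encard_le_eRk_of_subset hJX
    exact ENat.toNat_le_toNat hle hIfin.encard_lt_top.ne

def IsFullFlag (M : Matroid α) (d : ℕ) (F : Fin d → Set α) : Prop :=
  StrictMono F ∧ (∀ i, M.IsFlat (F i)) ∧ (∀ i, F i ≠ M.E) ∧ ∀ i : Fin d, M.rk (F i) = (i : ℕ) + 1

lemma isFullFlag_closure_take {L : List α} (hL : L.Nodup) (hB : M.IsBase {x | x ∈ L}) {d : ℕ}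
    (hrk : M.rk M.E = d + 1) :
    M.IsFullFlag d fun i ↦ M.closure {x | x ∈ L.take (i + 1)} := by
  have hlen : L.length = d + 1 := by
    rw [← hL.ncard_setOf_mem, ← hB.isBasis_ground.isBasis'.rk_eq_ncard L.finite_toSet, hrk]
  have hrkF (i : Fin d) : M.rk (M.closure {x | x ∈ L.take (i + 1)}) = i + 1 := by
    have hind : M.Indep {x | x ∈ L.take (i + 1)} :=
      hB.indep.subset fun x hx ↦ List.take_subset _ _ hx
    rw [hind.isBasis_closure.isBasis'.rk_eq_ncard (L.take _).finite_toSet,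
      (hL.sublist (L.take_sublist _)).ncard_setOf_mem, List.length_take, hlen]
    omega
  refine ⟨fun i j hij ↦ ?_, fun _ ↦ M.isFlat_closure _, fun i h ↦ ?_, hrkF⟩
  · refine (M.closure_subset_closure fun x hx ↦
      List.take_subset_take_left L (Nat.succ_le_succ hij.le) hx).ssubset_of_ne fun h ↦ ?_
    have := hrkF i ▸ h ▸ hrkF j
    exact hij.ne (Fin.ext (by omega))
  · have := hrkF i
    rw [show M.closure _ = M.E from h, hrk] at this
    omega

lemma Indep.exists_isFullFlag_through {K : Set α} {f : α} (hK : M.Indep K) (hfK : f ∈ K)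
    (hfin : M.E.Finite) {d : ℕ} (hrk : M.rk M.E = d + 1) :
    ∃ F, M.IsFullFlag d F ∧ ∀ i, F i ⊆ M.closure (K \ {f}) ∨ K ⊆ F i := by
  obtain ⟨B, hB, hKB⟩ := hK.exists_isBase_superset
  obtain ⟨l₁, hl₁, mem₁⟩ := (hfin.subset ((Set.sdiff_subset.trans hK.subset_ground :
    K \ {f} ⊆ M.E))).exists_nodup_list
  obtain ⟨l₂, hl₂, mem₂⟩ := (hfin.subset ((Set.sdiff_subset.trans hB.subset_ground :
    B \ K ⊆ M.E))).exists_nodup_list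
  simp only [Set.ext_iff, Set.mem_ofPred_eq] at mem₁ mem₂
  have memK (x) : x ∈ K ↔ x = f ∨ x ∈ K \ {f} := by
    by_cases h : x = f <;> simp [h, hfK]
  have hL : (l₁ ++ f :: l₂).Nodup := by
    refine List.nodup_append.mpr ⟨hl₁, List.nodup_cons.mpr ⟨fun h ↦ ((mem₂ f).mp h).2 hfK, hl₂⟩, ?_⟩
    rintro a ha b hb rfl
    rcases List.mem_cons.mp hb with rfl | hb
    · exact ((mem₁ a).mp ha).2 rfl
    · exact ((mem₂ a).mp hb).2 ((mem₁ a).mp ha).1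
  have hLB : {x | x ∈ l₁ ++ f :: l₂} = B := by
    ext x
    simp only [Set.mem_ofPred_eq, List.mem_append, List.mem_cons, mem₁, mem₂, Set.mem_sdiff]
    have := memK x
    have := @hKB x
    tauto
  refine ⟨_, isFullFlag_closure_take hL (hLB ▸ hB) hrk, fun i ↦ ?_⟩
  rcases le_or_gt ((i : ℕ) + 1) l₁.length with hn | hn
  · refine Or.inl (M.closure_subset_closure fun x hx ↦ (mem₁ x).mp ?_)
    rw [Set.mem_ofPred_eq, List.take_append_of_le_length hn] at hx
    exact List.take_subset _ _ hx
  · refine Or.inr ((M.subset_closure K hK.subset_ground).trans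
      (M.closure_subset_closure fun x hx ↦ List.take_subset_take_left _ hn ?_))
    change x ∈ (l₁ ++ f :: l₂).take (l₁.length + 1)
    rw [List.take_length_add_append]
    simpa [mem₁, hx] using (em (x = f)).symm

lemma IsCircuit.exists_isFullFlag_mem_iff {C : Set α} {e f : α} (hC : M.IsCircuit C) (he : e ∈ C)
    (hf : f ∈ C) (hef : e ≠ f) (hfin : M.E.Finite) {d : ℕ} (hrk : M.rk M.E = d + 1) :
    ∃ F, M.IsFullFlag d F ∧ ∀ i, (e ∈ F i ↔ f ∈ F i) := by
  have hfK : f ∈ C \ {e} := ⟨hf, hef.symm⟩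
  obtain ⟨F, hF, hFK⟩ := (hC.sdiff_singleton_indep he).exists_isFullFlag_through hfK hfin hrk
  have hcomm : (C \ {e}) \ {f} = (C \ {f}) \ {e} := by
    simp only [Set.sdiff_sdiff, Set.union_comm]
  refine ⟨F, hF, fun i ↦ ?_⟩
  rcases hFK i with hsub | hsup
  · have he_notMem : e ∉ M.closure ((C \ {e}) \ {f}) :=
      hcomm ▸ (hC.sdiff_singleton_indep hf).notMem_closure_sdiff_of_mem ⟨he, hef⟩
    have hf_notMem : f ∉ M.closure ((C \ {e}) \ {f}) :=
      (hC.sdiff_singleton_indep he).notMem_closure_sdiff_of_mem hfK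
    exact iff_of_false (fun h ↦ he_notMem (hsub h)) (fun h ↦ hf_notMem (hsub h))
  · exact iff_of_true ((hF.2.1 i).closure ▸ M.closure_subset_closure hsup
      (hC.mem_closure_sdiff_singleton_of_mem he)) (hsup hfK)

end Matroid

theorem constant_on_components_of_mem_span_of_flags_general
    {α : Type*} {M : Matroid α} (hfin : M.E.Finite)
    {d : ℕ} (hrk : M.rk M.E = d + 1) (v : α → ℝ)
    (hv : ∀ F : Fin d → Set α, StrictMono F → (∀ i, M.IsFlat (F i)) → (∀ i, F i ≠ M.E) →
      (∀ i : Fin d, M.rk (F i) = (i : ℕ) + 1) →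
      v ∈ Submodule.span ℝ (insert (Set.indicator M.E (1 : α → ℝ))
        (Set.range fun i => Set.indicator (F i) (1 : α → ℝ)))) :
    (∀ C, M.Circuit C → ∀ e ∈ C, ∀ f ∈ C, v e = v f) ∧
    (∀ e f, M.ConnectedTo e f → v e = v f) := by
  have hcircuit : ∀ C, M.Circuit C → ∀ e ∈ C, ∀ f ∈ C, v e = v f := by
    intro C hC e he f hf
    obtain rfl | hef := eq_or_ne e f
    · rfl
    obtain ⟨F, ⟨hmono, hflat, hproper, hrkF⟩, hF⟩ :=
      hC.isCircuit.exists_isFullFlag_mem_iff he hf hef hfin hrk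
    have hindicator (s : Set α) (hs : e ∈ s ↔ f ∈ s) :
        s.indicator (1 : α → ℝ) e = s.indicator 1 f := by
      by_cases hfs : f ∈ s <;> simp [hfs, hs]
    refine apply_eq_apply_of_mem_span ?_ (hv F hmono hflat hproper hrkF)
    rintro w (rfl | ⟨i, rfl⟩)
    · exact hindicator _ (iff_of_true (hC.1.subset_ground he) (hC.1.subset_ground hf))
    · exact hindicator _ (hF i)
  refine ⟨hcircuit, fun e f h ↦ ?_⟩
  have hker : Equivalence fun x y : α ↦ v x = v y := (Setoid.ker v).iseqv
  exact hker.eqvGen_iff.mp (h.mono fun x y ⟨C, hC, hx, hy⟩ ↦ hcircuit C hC x hx y hy)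

/-- Let `M` be a loopless matroid of rank `d + 1` on a finite ground
set and let `v` be a vector lying, for every full flag `F 0 ⊊ ⋯ ⊊ F (d-1)` of proper
flats with `rk (F i) = i + 1`, in the `ℝ`-linear span of the indicator vectors of the
flats of the flag together with the indicator vector of the ground set.  Then
`v e = v f` whenever `e` and `f` lie in a common circuit of `M`; consequently `v` is
constant on each connected component of `M`. -/
theorem constant_on_components_of_mem_span_of_flags
    {α : Type*} {M : Matroid α} (hfin : M.E.Finite) (hloop : M.Loopless')
    {d : ℕ} (hrk : M.rk M.E = d + 1) (v : α → ℝ)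
    (hv : ∀ F : Fin d → Set α, StrictMono F → (∀ i, M.IsFlat (F i)) → (∀ i, F i ≠ M.E) →
      (∀ i : Fin d, M.rk (F i) = (i : ℕ) + 1) →
      v ∈ Submodule.span ℝ (insert (Set.indicator M.E (1 : α → ℝ))
        (Set.range fun i => Set.indicator (F i) (1 : α → ℝ)))) :
    (∀ C, M.Circuit C → ∀ e ∈ C, ∀ f ∈ C, v e = v f) ∧
    (∀ e f, M.ConnectedTo e f → v e = v f) :=
  constant_on_components_of_mem_span_of_flags_general hfin hrk v hv
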